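/- Let T be a cocompact G-tree, T̃ a minimal G-tree, and q : T̃ → T a G-equivariant tree morphism that is not locally injective. Then there exists at most one end E₀ of T such that no collapsing pair faces E₀; that is, any two distinct ends of T cannot both fail to be faced by a collapsing pair. -/

import Mathlib

/-!
If neither end is faced by a collapsing pair, then every collapsing pair `(p, w₁)` points away from
both ends: the Busemann functions `f₁`, `f₂` of the two ends both grow by one from `q p` to `q w₁`.
Because the ends are distinct, `f₁ + f₂` is bounded below, and at a vertex `z` where it is minimal
every collapsing pair points away from `z` as well. So the intersection `Y` of the half-trees behind
all collapsing pairs is a nonempty, convex, `G`-invariant subtree of `T`.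

The distance to `Y`, pulled back along `q`, grows by one across every collapsing pair; hence it has
no positive local maximum on a geodesic of `T̃`, and its minimal sublevel set is a nonempty
invariant subtree of `T̃`. By minimality that subtree is all of `T̃`, so the pulled-back distance is
constant, which a collapsing pair (there is one, as `q` is not locally injective) contradicts.
-/

/-- A geodesic ray in a tree: an injective sequence of consecutively adjacent
vertices. -/
def IsGeodRay {V : Type*} (T : SimpleGraph V) (τ : ℕ → V) : Prop :=
  (∀ n, T.Adj (τ n) (τ (n + 1))) ∧ Function.Injective τ

/-- Two geodesic rays represent the same end iff they eventually coincide. -/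
def RayEquiv {V : Type*} (τ σ : ℕ → V) : Prop :=
  ∃ k l : ℕ, ∀ n : ℕ, τ (k + n) = σ (l + n)

/-- A `G`-tree is minimal if it has no proper nonempty `G`-invariant subtree. -/
def IsMinimalGTree {V : Type*} (T : SimpleGraph V) (G : Type*) [Group G]
    [MulAction G V] : Prop :=
  ∀ A : Set V, A.Nonempty →
    (∀ a b c : V, a ∈ A → c ∈ A → T.dist a b + T.dist b c = T.dist a c → b ∈ A) →
    (∀ (g : G) (x : V), x ∈ A → g • x ∈ A) →
    A = Set.univ

/-- A collapsing pair under `q` faces the end represented by the geodesic ray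
`τ`: there are distinct edges `(p, w₁)`, `(p, w₂)` of `T̃` with `q w₁ = q w₂`
such that the ray from `q p` representing the end passes through the edge
`(q p, q w₁)`, i.e. eventually `d(q p, τ n) = d(q w₁, τ n) + 1`. -/
def CollapsingPairFacesRay {W V : Type*} (S : SimpleGraph W) (T : SimpleGraph V)
    (q : W → V) (τ : ℕ → V) : Prop :=
  ∃ p w₁ w₂ : W, S.Adj p w₁ ∧ S.Adj p w₂ ∧ w₁ ≠ w₂ ∧ q w₁ = q w₂ ∧
    ∃ N : ℕ, ∀ n ≥ N, T.dist (q p) (τ n) = T.dist (q w₁) (τ n) + 1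

open Filter

namespace SimpleGraph

variable {V : Type*} {T : SimpleGraph V}

def IsBetween (T : SimpleGraph V) (x m y : V) : Prop :=
  T.dist x m + T.dist m y = T.dist x y

-- For an edge `ab` of a tree, the component of `a` after deleting the edge.
def halfTree (T : SimpleGraph V) (a b : V) : Set V :=
  {x | T.dist x b = T.dist x a + 1}

theorem mem_halfTree {a b x : V} : x ∈ T.halfTree a b ↔ T.dist x b = T.dist x a + 1 :=
  Iff.rfl

def IsGeodConvex (T : SimpleGraph V) (Y : Set V) : Prop :=
  ∀ x m y : V, x ∈ Y → y ∈ Y → T.IsBetween x m y → m ∈ Y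

theorem isBetween_of_adj {x u y : V} (hxu : T.Adj x u) (h : T.dist u y + 1 = T.dist x y) :
    T.IsBetween x u y := by
  rw [IsBetween, dist_eq_one_iff_adj.2 hxu]
  omega

namespace IsTree

variable (hT : T.IsTree)
include hT

theorem dist_triangle (u v w : V) : T.dist u w ≤ T.dist u v + T.dist v w :=
  hT.connected.dist_triangle

theorem length_eq_dist {u v : V} {p : T.Walk u v} (hp : p.IsPath) : p.length = T.dist u v := by
  obtain ⟨q, hq, hql⟩ := hT.connected.exists_path_of_dist u v
  rw [← hql, show p = q from
    congrArg Subtype.val ((hT.isAcyclic.subsingleton_path u v).elim ⟨p, hp⟩ ⟨q, hq⟩)]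

theorem isBetween_of_mem_support {u v w : V} {p : T.Walk u v} (hp : p.IsPath)
    (hw : w ∈ p.support) : T.IsBetween u w v := by
  classical
  rw [IsBetween, ← hT.length_eq_dist hp, ← hT.length_eq_dist (hp.takeUntil hw),
    ← hT.length_eq_dist (hp.dropUntil hw), ← Walk.length_append, Walk.take_spec]

theorem mem_support_of_isBetween {u v w : V} (h : T.IsBetween u w v) {p : T.Walk u v}
    (hp : p.IsPath) : w ∈ p.support := by
  obtain ⟨p₁, h₁⟩ := hT.connected.exists_walk_length_eq_dist u w
  obtain ⟨p₂, h₂⟩ := hT.connected.exists_walk_length_eq_dist w v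
  have hpath : (p₁.append p₂).IsPath :=
    Walk.isPath_of_length_eq_dist _ (by rw [Walk.length_append, h₁, h₂, h])
  rw [show p = p₁.append p₂ from
    congrArg Subtype.val ((hT.isAcyclic.subsingleton_path u v).elim ⟨p, hp⟩ ⟨_, hpath⟩)]
  exact (Walk.mem_support_append_iff _ _).2 (Or.inl p₁.end_mem_support)

theorem eq_of_isBetween {u v w₁ w₂ : V} (h₁ : T.IsBetween u w₁ v) (h₂ : T.IsBetween u w₂ v)
    (hd : T.dist u w₁ = T.dist u w₂) : w₁ = w₂ := by
  obtain ⟨p, hp, -⟩ := hT.connected.exists_path_of_dist u v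
  have getVert_dist : ∀ w, T.IsBetween u w v → p.getVert (T.dist u w) = w := fun w hw => by
    classical
    have hmem := hT.mem_support_of_isBetween hw hp
    rw [← hT.length_eq_dist (hp.takeUntil hmem), Walk.getVert_length_takeUntil]
  rw [← getVert_dist _ h₁, ← getVert_dist _ h₂, hd]

theorem eq_of_adj_of_dist_add_one {x u₁ u₂ y : V} (h₁ : T.Adj x u₁) (h₂ : T.Adj x u₂)
    (hd₁ : T.dist u₁ y + 1 = T.dist x y) (hd₂ : T.dist u₂ y + 1 = T.dist x y) : u₁ = u₂ :=
  hT.eq_of_isBetween (isBetween_of_adj h₁ hd₁) (isBetween_of_adj h₂ hd₂)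
    (by rw [dist_eq_one_iff_adj.2 h₁, dist_eq_one_iff_adj.2 h₂])

theorem mem_halfTree_or_mem_halfTree {a b : V} (hab : T.Adj a b) (w : V) :
    w ∈ T.halfTree a b ∨ w ∈ T.halfTree b a := by
  obtain ⟨p, hp, hl⟩ := hT.connected.exists_path_of_dist w a
  by_cases hb : b ∈ p.support
  · right
    have h := hT.isBetween_of_mem_support hp hb
    rw [IsBetween, dist_eq_one_iff_adj.2 hab.symm] at h
    exact h.symm
  · left
    have hlen := hT.length_eq_dist (hp.concat hb hab)
    rw [Walk.length_concat, hl] at hlen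
    exact hlen.symm

theorem mem_halfTree_of_isBetween {a b x w : V} (hab : T.Adj a b) (hx : x ∈ T.halfTree a b)
    (hw : T.IsBetween x w a) : w ∈ T.halfTree a b := by
  refine (hT.mem_halfTree_or_mem_halfTree hab w).resolve_right fun hw' => ?_
  have := hT.dist_triangle x w b
  simp only [mem_halfTree, IsBetween] at hx hw hw'
  omega

theorem dist_eq_of_mem_halfTree {a b x y : V} (hab : T.Adj a b) (hx : x ∈ T.halfTree a b)
    (hy : y ∈ T.halfTree b a) : T.dist x y = T.dist x a + 1 + T.dist b y := by
  -- The geodesics `x → a` and `y → b` lie in opposite half-trees, so joining them by `ab` gives a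
  -- path.
  obtain ⟨P, hP, hPl⟩ := hT.connected.exists_path_of_dist x a
  obtain ⟨Q, hQ, hQl⟩ := hT.connected.exists_path_of_dist y b
  have hpath : (P.append (Q.reverse.cons hab)).IsPath := by
    rw [Walk.isPath_def, Walk.support_append, Walk.support_cons, List.tail_cons]
    refine hP.support_nodup.append hQ.reverse.support_nodup fun w hwP hwQ => ?_
    rw [Walk.support_reverse, List.mem_reverse] at hwQ
    have h₁ := hT.mem_halfTree_of_isBetween hab hx (hT.isBetween_of_mem_support hP hwP)
    have h₂ := hT.mem_halfTree_of_isBetween hab.symm hy (hT.isBetween_of_mem_support hQ hwQ)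
    simp only [mem_halfTree] at h₁ h₂
    omega
  rw [← hT.length_eq_dist hpath, Walk.length_append, Walk.length_cons, Walk.length_reverse, hPl,
    hQl, dist_comm (u := y)]
  omega

theorem isGeodConvex_halfTree {a b : V} (hab : T.Adj a b) : T.IsGeodConvex (T.halfTree a b) := by
  intro y₁ x y₂ hy₁ hy₂ hx
  refine (hT.mem_halfTree_or_mem_halfTree hab x).resolve_right fun hx' => ?_
  have h₁ := hT.dist_eq_of_mem_halfTree hab hy₁ hx'
  have h₂ := hT.dist_eq_of_mem_halfTree hab hy₂ hx'
  have := hT.dist_triangle y₁ a y₂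
  simp only [IsBetween] at hx
  rw [dist_comm (u := x) (v := y₂), dist_comm (u := a) (v := y₂)] at *
  omega

end IsTree

theorem dist_smul {G : Type*} [Group G] [MulAction G V] (hT : T.Connected)
    (hact : ∀ (g : G) (x y : V), T.Adj x y → T.Adj (g • x) (g • y)) (g : G) (x y : V) :
    T.dist (g • x) (g • y) = T.dist x y := by
  have hle : ∀ (g : G) (x y : V), T.dist (g • x) (g • y) ≤ T.dist x y := fun g x y => by
    obtain ⟨p, hp⟩ := hT.exists_walk_length_eq_dist x y
    calc T.dist (g • x) (g • y)
        ≤ (p.map (⟨(g • ·), hact g _ _⟩ : T →g T)).length := dist_le _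
      _ = T.dist x y := by rw [Walk.length_map, hp]
  refine le_antisymm (hle g x y) ?_
  simpa using hle g⁻¹ (g • x) (g • y)

-- Junk value `0` when `Y` is empty.
noncomputable def distToSet (T : SimpleGraph V) (Y : Set V) (v : V) : ℕ :=
  sInf (T.dist v '' Y)

variable {Y : Set V}

variable (T) in
theorem distToSet_le {v y : V} (hy : y ∈ Y) : T.distToSet Y v ≤ T.dist v y :=
  Nat.sInf_le ⟨y, hy, rfl⟩

variable (T) in
theorem exists_dist_eq_distToSet (hY : Y.Nonempty) (v : V) :
    ∃ y ∈ Y, T.dist v y = T.distToSet Y v :=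
  Nat.sInf_mem (hY.image _)

theorem distToSet_eq_add_one_of_subset_halfTree (hY : Y.Nonempty) {a b : V}
    (hsub : Y ⊆ T.halfTree a b) : T.distToSet Y b = T.distToSet Y a + 1 := by
  obtain ⟨y, hy, hya⟩ := T.exists_dist_eq_distToSet hY a
  obtain ⟨y', hy', hyb⟩ := T.exists_dist_eq_distToSet hY b
  have h₁ := T.distToSet_le (v := b) hy
  have h₂ := T.distToSet_le (v := a) hy'
  have e₁ := hsub hy
  have e₂ := hsub hy'
  simp only [mem_halfTree] at e₁ e₂
  rw [dist_comm (u := y), dist_comm (u := y)] at e₁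
  rw [dist_comm (u := y'), dist_comm (u := y')] at e₂
  omega

theorem distToSet_smul {G : Type*} [Group G] [MulAction G V]
    (hdist : ∀ (g : G) (x y : V), T.dist (g • x) (g • y) = T.dist x y)
    (hY : ∀ (g : G), ∀ y ∈ Y, g • y ∈ Y) (g : G) (v : V) :
    T.distToSet Y (g • v) = T.distToSet Y v := by
  unfold distToSet
  congr 1
  ext n
  constructor
  · rintro ⟨y, hy, rfl⟩
    exact ⟨g⁻¹ • y, hY _ _ hy, by rw [← hdist g, smul_inv_smul]⟩
  · rintro ⟨y, hy, rfl⟩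
    exact ⟨g • y, hY _ _ hy, hdist g v y⟩

namespace IsTree

variable (hT : T.IsTree) (hY : Y.Nonempty)
include hT hY

theorem distToSet_le_add_one_of_adj {x u : V} (hxu : T.Adj x u) :
    T.distToSet Y x ≤ T.distToSet Y u + 1 := by
  obtain ⟨y, hy, hyu⟩ := T.exists_dist_eq_distToSet hY u
  have := hT.dist_triangle x u y
  have := T.distToSet_le (v := x) hy
  rw [dist_eq_one_iff_adj.2 hxu] at *
  omega

variable (hconv : T.IsGeodConvex Y)
include hconv

theorem distToSet_eq_zero_of_adj_of_eq {x u : V} (hxu : T.Adj x u)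
    (heq : T.distToSet Y u = T.distToSet Y x) : T.distToSet Y x = 0 := by
  obtain ⟨y₁, hy₁, hxy₁⟩ := T.exists_dist_eq_distToSet hY x
  obtain ⟨y₂, hy₂, huy₂⟩ := T.exists_dist_eq_distToSet hY u
  have h₁ := T.distToSet_le (v := u) hy₁
  have h₂ := T.distToSet_le (v := x) hy₂
  have c₁ : T.dist y₁ x = T.dist x y₁ := dist_comm
  have c₂ : T.dist y₁ u = T.dist u y₁ := dist_comm
  have c₃ : T.dist y₂ x = T.dist x y₂ := dist_comm
  have c₄ : T.dist y₂ u = T.dist u y₂ := dist_comm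
  have s₁ : y₁ ∈ T.halfTree x u := (hT.mem_halfTree_or_mem_halfTree hxu y₁).resolve_right
    fun h => by simp only [mem_halfTree] at h; omega
  have s₂ : y₂ ∈ T.halfTree u x := (hT.mem_halfTree_or_mem_halfTree hxu y₂).resolve_left
    fun h => by simp only [mem_halfTree] at h; omega
  have hsep := hT.dist_eq_of_mem_halfTree hxu s₁ s₂
  simp only [mem_halfTree] at s₂
  have hx : x ∈ Y := hconv y₁ x y₂ hy₁ hy₂ (by rw [IsBetween]; omega)
  simpa using T.distToSet_le (v := x) hx

theorem distToSet_add_one_eq_of_adj {x u : V} (hxu : T.Adj x u)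
    (hle : T.distToSet Y u ≤ T.distToSet Y x) (hx : T.distToSet Y x ≠ 0) :
    T.distToSet Y u + 1 = T.distToSet Y x := by
  have := hT.distToSet_le_add_one_of_adj hY hxu
  by_contra hne
  exact hx (hT.distToSet_eq_zero_of_adj_of_eq hY hconv hxu (by omega))

-- If `y₂` were on the `x`-side of the edge `x u₁`, then `x` would lie between `y₁` and `y₂`.
theorem eq_of_adj_of_distToSet_add_one {x u₁ u₂ : V} (h₁ : T.Adj x u₁) (h₂ : T.Adj x u₂)
    (hk₁ : T.distToSet Y u₁ + 1 = T.distToSet Y x)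
    (hk₂ : T.distToSet Y u₂ + 1 = T.distToSet Y x) : u₁ = u₂ := by
  obtain ⟨y₁, hy₁, hd₁⟩ := T.exists_dist_eq_distToSet hY u₁
  obtain ⟨y₂, hy₂, hd₂⟩ := T.exists_dist_eq_distToSet hY u₂
  have hx₁ := T.distToSet_le (v := x) hy₁
  have hx₂ := T.distToSet_le (v := x) hy₂
  have t₁ := hT.dist_triangle x u₁ y₁
  have t₂ := hT.dist_triangle x u₂ y₂
  rw [dist_eq_one_iff_adj.2 h₁] at t₁
  rw [dist_eq_one_iff_adj.2 h₂] at t₂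
  have c₁ : T.dist y₁ x = T.dist x y₁ := dist_comm
  have c₂ : T.dist y₁ u₁ = T.dist u₁ y₁ := dist_comm
  have c₃ : T.dist y₂ x = T.dist x y₂ := dist_comm
  have c₄ : T.dist y₂ u₁ = T.dist u₁ y₂ := dist_comm
  rcases hT.mem_halfTree_or_mem_halfTree h₁ y₂ with s₂ | s₂
  · have s₁ : y₁ ∈ T.halfTree u₁ x := by
      simp only [mem_halfTree]
      omega
    have hsep := hT.dist_eq_of_mem_halfTree h₁.symm s₁ s₂
    have hx : x ∈ Y := hconv y₁ x y₂ hy₁ hy₂ (by rw [IsBetween]; omega)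
    have := T.distToSet_le (v := x) hx
    simp only [dist_self, nonpos_iff_eq_zero] at this
    omega
  · simp only [mem_halfTree] at s₂
    exact hT.eq_of_adj_of_dist_add_one (y := y₂) h₁ h₂ (by omega) (by omega)

end IsTree

theorem IsTree.isGeodConvex_setOf_le {W : Type*} {S : SimpleGraph W} (hS : S.IsTree)
    {f : W → ℕ} (hf : ∀ x u₁ u₂, S.Adj x u₁ → S.Adj x u₂ → u₁ ≠ u₂ → f u₁ ≤ f x → f u₂ ≤ f x →
      f x = 0) (c : ℕ) : S.IsGeodConvex {x | f x ≤ c} := by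
  intro x m y hx hy hm
  change f x ≤ c at hx
  change f y ≤ c at hy
  change f m ≤ c
  obtain ⟨p, hp, -⟩ := hS.connected.exists_path_of_dist x y
  obtain ⟨i, rfl, hi⟩ := Walk.mem_support_iff_exists_getVert.1 (hS.mem_support_of_isBetween hm hp)
  obtain ⟨j, hj, hmax⟩ := Finset.exists_max_image (Finset.range (p.length + 1))
    (fun j => f (p.getVert j)) ⟨0, by simp⟩
  simp only [Finset.mem_range] at hj hmax
  refine (hmax i (by omega)).trans (by_contra fun hgt => ?_)
  have hj₀ : j ≠ 0 := by rintro rfl; simp only [Walk.getVert_zero] at hgt; omega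
  have hjl : j ≠ p.length := by rintro rfl; simp only [Walk.getVert_length] at hgt; omega
  obtain ⟨j, rfl⟩ : ∃ j', j = j' + 1 := ⟨j - 1, by omega⟩
  have hne : p.getVert j ≠ p.getVert (j + 1 + 1) := fun h => by
    have := hp.getVert_injOn (by simp only [Set.mem_ofPred_eq]; omega)
      (by simp only [Set.mem_ofPred_eq]; omega) h
    omega
  have := hf _ _ _ (p.adj_getVert_succ (by omega)).symm (p.adj_getVert_succ (by omega)) hne
    (hmax j (by omega)) (hmax (j + 1 + 1) (by omega))
  omega

end SimpleGraph

open SimpleGraph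

theorem Antitone.exists_eventually_eq_of_bddBelow {a : ℕ → ℤ} (ha : Antitone a)
    (hb : BddBelow (Set.range a)) : ∃ c, ∀ᶠ n in atTop, a n = c := by
  obtain ⟨b, hb⟩ := hb
  obtain ⟨c, ⟨N, rfl⟩, hmin⟩ := Int.exists_least_of_bdd (P := (· ∈ Set.range a))
    ⟨b, fun _ hz => hb hz⟩ ⟨a 0, 0, rfl⟩
  exact ⟨a N, eventually_atTop.2 ⟨N, fun n hn => le_antisymm (ha hn) (hmin _ ⟨n, rfl⟩)⟩⟩

section Rays

variable {V : Type*} {T : SimpleGraph V}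

theorem IsGeodRay.dist_eq {τ : ℕ → V} (hT : T.IsTree) (hτ : IsGeodRay T τ) (m k : ℕ) :
    T.dist (τ m) (τ (m + k)) = k := by
  have step : ∀ k, T.dist (τ m) (τ (m + k + 1)) = T.dist (τ m) (τ (m + k)) + 1 := by
    intro k
    induction k with
    | zero => simp [dist_eq_one_iff_adj.2 (hτ.1 m)]
    | succ k ih =>
      rcases hT.mem_halfTree_or_mem_halfTree (hτ.1 (m + k + 1)) (τ m) with h | h
      · exact h
      · -- Then `τ (m + k)` and `τ (m + k + 2)` are both the first step from `τ (m + k + 1)`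
        -- towards `τ m`.
        have h₁ : T.dist (τ (m + k)) (τ m) = T.dist (τ m) (τ (m + k)) := dist_comm
        have h₂ : T.dist (τ (m + k + 1 + 1)) (τ m) = T.dist (τ m) (τ (m + k + 1 + 1)) := dist_comm
        have h₃ : T.dist (τ (m + k + 1)) (τ m) = T.dist (τ m) (τ (m + k + 1)) := dist_comm
        simp only [mem_halfTree] at h
        have := hτ.2 (hT.eq_of_adj_of_dist_add_one (y := τ m) (hτ.1 (m + k)).symm
          (hτ.1 (m + k + 1)) (by omega) (by omega))
        omega
  induction k with
  | zero => simp
  | succ k ih => rw [← add_assoc, step, ih]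

namespace SimpleGraph

def IsBusemann (T : SimpleGraph V) (τ : ℕ → V) (f : V → ℤ) : Prop :=
  ∀ x, ∀ᶠ n in atTop, (T.dist x (τ n) : ℤ) = n + f x

theorem _root_.IsGeodRay.exists_isBusemann {τ : ℕ → V} (hT : T.IsTree) (hτ : IsGeodRay T τ) :
    ∃ f, T.IsBusemann τ f := by
  have h : ∀ x, ∃ c : ℤ, ∀ᶠ n in atTop, (T.dist x (τ n) : ℤ) - n = c := fun x => by
    refine (antitone_nat_of_succ_le fun n => ?_).exists_eventually_eq_of_bddBelow
      ⟨-(T.dist x (τ 0) : ℤ), ?_⟩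
    · have := hT.dist_triangle x (τ n) (τ (n + 1))
      rw [dist_eq_one_iff_adj.2 (hτ.1 n)] at this
      push_cast
      omega
    · rintro _ ⟨n, rfl⟩
      have h₁ := hτ.dist_eq hT 0 n
      have h₂ := hT.dist_triangle (τ 0) x (τ n)
      have h₃ : T.dist (τ 0) x = T.dist x (τ 0) := dist_comm
      rw [zero_add] at h₁
      dsimp only
      omega
  choose f hf using h
  exact ⟨f, fun x => (hf x).mono fun n hn => by omega⟩

namespace IsBusemann

variable {τ : ℕ → V} {f : V → ℤ}

theorem eventually_dist_eq (hf : T.IsBusemann τ f) (x y : V) :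
    ∀ᶠ n in atTop, (T.dist x (τ n) : ℤ) = T.dist y (τ n) + (f x - f y) :=
  ((hf x).and (hf y)).mono fun _ h => by omega

theorem le_add_dist (hT : T.IsTree) (hf : T.IsBusemann τ f) (x y : V) :
    f x ≤ f y + T.dist x y := by
  obtain ⟨n, hn⟩ := (hf.eventually_dist_eq x y).exists
  have := hT.dist_triangle x y (τ n)
  omega

theorem add_one_or_add_one (hT : T.IsTree) (hf : T.IsBusemann τ f) {a b : V} (hab : T.Adj a b) :
    f b = f a + 1 ∨ f a = f b + 1 := by
  obtain ⟨n, hn⟩ := (hf.eventually_dist_eq b a).exists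
  have h₁ : T.dist (τ n) a = T.dist a (τ n) := dist_comm
  have h₂ : T.dist (τ n) b = T.dist b (τ n) := dist_comm
  rcases hT.mem_halfTree_or_mem_halfTree hab (τ n) with h | h <;>
    simp only [mem_halfTree] at h <;> omega

theorem eq_of_adj (hT : T.IsTree) (hf : T.IsBusemann τ f) {x u₁ u₂ : V} (h₁ : T.Adj x u₁)
    (h₂ : T.Adj x u₂) (hf₁ : f u₁ + 1 = f x) (hf₂ : f u₂ + 1 = f x) : u₁ = u₂ := by
  obtain ⟨n, hn₁, hn₂⟩ := ((hf.eventually_dist_eq x u₁).and (hf.eventually_dist_eq x u₂)).exists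
  exact hT.eq_of_adj_of_dist_add_one (y := τ n) h₁ h₂ (by omega) (by omega)

-- Otherwise `v` would have two distinct neighbours closer to the end.
theorem add_one_of_add_one (hT : T.IsTree) (hf : T.IsBusemann τ f) {u v w : V} (huv : T.Adj u v)
    (hvw : T.Adj v w) (huw : u ≠ w) (h : f v = f u + 1) : f w = f v + 1 :=
  (hf.add_one_or_add_one hT hvw).resolve_right fun h' =>
    huw (hf.eq_of_adj hT huv.symm hvw (by omega) (by omega))

theorem eq_add_dist_of_mem_halfTree (hT : T.IsTree) (hf : T.IsBusemann τ f) {a b z : V}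
    (hab : T.Adj a b) (hfab : f b = f a + 1) (hz : z ∈ T.halfTree b a) :
    f z = f a + T.dist z a := by
  obtain ⟨n, hb, hz'⟩ := ((hf.eventually_dist_eq b a).and (hf.eventually_dist_eq z a)).exists
  have hn : τ n ∈ T.halfTree a b := by
    have h₁ : T.dist (τ n) a = T.dist a (τ n) := dist_comm
    have h₂ : T.dist (τ n) b = T.dist b (τ n) := dist_comm
    simp only [mem_halfTree]
    omega
  have := hT.dist_eq_of_mem_halfTree hab.symm hz hn
  simp only [mem_halfTree] at hz
  omega

theorem eventually_dist_eq_add_one (hf : T.IsBusemann τ f) {a b : V} (h : f a = f b + 1) :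
    ∀ᶠ n in atTop, T.dist a (τ n) = T.dist b (τ n) + 1 :=
  (hf.eventually_dist_eq a b).mono fun _ hn => by omega

-- `τ₁ (m + c)` and `τ m` both lie on the geodesic from `τ₁ 0` to a far point `τ m'`, at the
-- same distance `m + c` from `τ₁ 0`.
theorem rayEquiv_of_forall_eq_sub (hT : T.IsTree) {τ₁ : ℕ → V} (hτ₁ : IsGeodRay T τ₁)
    (hτ : IsGeodRay T τ) (hf : T.IsBusemann τ f) (h : ∀ n, f (τ₁ n) = f (τ₁ 0) - n) :
    RayEquiv τ₁ τ := by
  set c := f (τ₁ 0)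
  obtain ⟨N, hN⟩ := eventually_atTop.1 (hf (τ₁ 0))
  have key : ∀ m ≥ max N (-c).toNat, τ₁ (m + c).toNat = τ m := by
    intro m hm
    set j := (m + c).toNat
    obtain ⟨m', hm', hm'm⟩ := ((hf (τ₁ j)).and (eventually_ge_atTop m)).exists
    have hj := hτ₁.dist_eq hT 0 j
    have hm'' := hτ.dist_eq hT m (m' - m)
    rw [zero_add] at hj
    rw [show m + (m' - m) = m' by omega] at hm''
    have e₁ := hN m' (by omega)
    have e₂ := hN m (by omega)
    have e₃ := h j
    refine hT.eq_of_isBetween (u := τ₁ 0) (v := τ m') ?_ ?_ (by omega)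
    · simp only [IsBetween]
      omega
    · simp only [IsBetween]
      omega
  refine ⟨(max N (-c).toNat + c).toNat, max N (-c).toNat, fun n => ?_⟩
  rw [← key _ (Nat.le_add_right _ n)]
  congr 1
  omega

-- `n - f (τ₁ n)` is monotone. Once `f` increases along `τ₁` it keeps increasing, so this is
-- eventually constant; if `f` never increases along `τ₁`, the two rays are equivalent.
theorem exists_le_add_of_not_rayEquiv (hT : T.IsTree) {τ₁ : ℕ → V} (hτ₁ : IsGeodRay T τ₁)
    (hτ : IsGeodRay T τ) (hf : T.IsBusemann τ f) (hne : ¬ RayEquiv τ₁ τ) :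
    ∃ B, ∀ n : ℕ, (n : ℤ) ≤ f (τ₁ n) + B := by
  by_cases hup : ∃ n₀, f (τ₁ (n₀ + 1)) = f (τ₁ n₀) + 1
  · obtain ⟨n₀, hn₀⟩ := hup
    have hmono : Monotone fun n : ℕ => (n : ℤ) - f (τ₁ n) := monotone_nat_of_le_succ fun n => by
      have := hf.le_add_dist hT (τ₁ (n + 1)) (τ₁ n)
      rw [dist_eq_one_iff_adj.2 (hτ₁.1 n).symm] at this
      push_cast
      omega
    have hconst : ∀ n ≥ n₀, (n : ℤ) - f (τ₁ n) = n₀ - f (τ₁ n₀) ∧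
        f (τ₁ (n + 1)) = f (τ₁ n) + 1 := by
      intro n hn
      induction n, hn using Nat.le_induction with
      | base => exact ⟨rfl, hn₀⟩
      | succ n _ ih =>
        refine ⟨by push_cast; omega, hf.add_one_of_add_one hT (hτ₁.1 n) (hτ₁.1 (n + 1)) ?_ ih.2⟩
        exact fun h => by have := hτ₁.2 h; omega
    refine ⟨n₀ - f (τ₁ n₀), fun n => ?_⟩
    have h₁ := hmono (le_max_left n n₀)
    have h₂ := (hconst (max n n₀) (le_max_right _ _)).1
    simp only at h₁
    omega
  · push Not at hup
    refine absurd (hf.rayEquiv_of_forall_eq_sub hT hτ₁ hτ fun n => ?_) hne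
    induction n with
    | zero => simp
    | succ n ih =>
      have := (hf.add_one_or_add_one hT (hτ₁.1 n)).resolve_left (hup n)
      push_cast
      omega

end IsBusemann

theorem exists_isMin_add (hT : T.IsTree) {τ₁ τ₂ : ℕ → V} (hτ₁ : IsGeodRay T τ₁)
    (hτ₂ : IsGeodRay T τ₂) (hne : ¬ RayEquiv τ₁ τ₂) {f₁ f₂ : V → ℤ} (hf₁ : T.IsBusemann τ₁ f₁)
    (hf₂ : T.IsBusemann τ₂ f₂) : ∃ z, ∀ x, f₁ z + f₂ z ≤ f₁ x + f₂ x := by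
  obtain ⟨B, hB⟩ := hf₂.exists_le_add_of_not_rayEquiv hT hτ₁ hτ₂ hne
  have hbdd : ∀ x, -B ≤ f₁ x + f₂ x := fun x => by
    obtain ⟨n, hn⟩ := (hf₁ x).exists
    have := hf₂.le_add_dist hT (τ₁ n) x
    have := hB n
    rw [dist_comm] at hn
    omega
  obtain ⟨_, ⟨z, rfl⟩, hmin⟩ := Int.exists_least_of_bdd
    (P := (· ∈ Set.range fun x => f₁ x + f₂ x))
    ⟨-B, by rintro _ ⟨x, rfl⟩; exact hbdd x⟩ ⟨_, τ₁ 0, rfl⟩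
  exact ⟨z, fun x => hmin _ ⟨x, rfl⟩⟩

theorem mem_halfTree_of_isMin_add (hT : T.IsTree) {τ₁ τ₂ : ℕ → V} {f₁ f₂ : V → ℤ}
    (hf₁ : T.IsBusemann τ₁ f₁) (hf₂ : T.IsBusemann τ₂ f₂) {z : V}
    (hz : ∀ x, f₁ z + f₂ z ≤ f₁ x + f₂ x) {a b : V} (hab : T.Adj a b) (h₁ : f₁ b = f₁ a + 1)
    (h₂ : f₂ b = f₂ a + 1) : z ∈ T.halfTree a b := by
  refine (hT.mem_halfTree_or_mem_halfTree hab z).resolve_right fun hz' => ?_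
  have e₁ := hf₁.eq_add_dist_of_mem_halfTree hT hab h₁ hz'
  have e₂ := hf₂.eq_add_dist_of_mem_halfTree hT hab h₂ hz'
  have := hz a
  simp only [mem_halfTree] at hz'
  omega

end SimpleGraph

end Rays

section CollapsingPairs

variable {W V : Type*} {S : SimpleGraph W} {T : SimpleGraph V} {q : W → V}

def IsCollapsingPair (S : SimpleGraph W) (q : W → V) (p w₁ w₂ : W) : Prop :=
  S.Adj p w₁ ∧ S.Adj p w₂ ∧ w₁ ≠ w₂ ∧ q w₁ = q w₂

theorem IsCollapsingPair.smul {G : Type*} [Group G] [MulAction G W] [MulAction G V]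
    (hactS : ∀ (g : G) (x y : W), S.Adj x y → S.Adj (g • x) (g • y))
    (hequiv : ∀ (g : G) (w : W), q (g • w) = g • q w) {p w₁ w₂ : W}
    (h : IsCollapsingPair S q p w₁ w₂) (g : G) : IsCollapsingPair S q (g • p) (g • w₁) (g • w₂) :=
  ⟨hactS _ _ _ h.1, hactS _ _ _ h.2.1, fun h' => h.2.2.1 (MulAction.injective g h'),
    by rw [hequiv, hequiv, h.2.2.2]⟩

theorem SimpleGraph.IsBusemann.add_one_of_not_collapsingPairFacesRay (hT : T.IsTree)
    (hq : ∀ a b : W, S.Adj a b → T.Adj (q a) (q b)) {τ : ℕ → V} {f : V → ℤ}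
    (hf : T.IsBusemann τ f) (hτ : ¬ CollapsingPairFacesRay S T q τ) {p w₁ w₂ : W}
    (h : IsCollapsingPair S q p w₁ w₂) : f (q w₁) = f (q p) + 1 :=
  (hf.add_one_or_add_one hT (hq _ _ h.1)).resolve_right fun hp =>
    hτ ⟨p, w₁, w₂, h.1, h.2.1, h.2.2.1, h.2.2.2,
      eventually_atTop.1 (hf.eventually_dist_eq_add_one hp)⟩

def behindCollapsingPairs (S : SimpleGraph W) (T : SimpleGraph V) (q : W → V) : Set V :=
  {y | ∀ p w₁ w₂, IsCollapsingPair S q p w₁ w₂ → y ∈ T.halfTree (q p) (q w₁)}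

theorem isGeodConvex_behindCollapsingPairs (hT : T.IsTree)
    (hq : ∀ a b : W, S.Adj a b → T.Adj (q a) (q b)) :
    T.IsGeodConvex (behindCollapsingPairs S T q) :=
  fun y₁ x y₂ hy₁ hy₂ hx p w₁ w₂ h =>
    hT.isGeodConvex_halfTree (hq _ _ h.1) y₁ x y₂ (hy₁ p w₁ w₂ h) (hy₂ p w₁ w₂ h) hx

theorem smul_mem_behindCollapsingPairs {G : Type*} [Group G] [MulAction G W] [MulAction G V]
    (hactS : ∀ (g : G) (x y : W), S.Adj x y → S.Adj (g • x) (g • y))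
    (hdist : ∀ (g : G) (x y : V), T.dist (g • x) (g • y) = T.dist x y)
    (hequiv : ∀ (g : G) (w : W), q (g • w) = g • q w) (g : G) {y : V}
    (hy : y ∈ behindCollapsingPairs S T q) : g • y ∈ behindCollapsingPairs S T q := by
  intro p w₁ w₂ h
  have := hy _ _ _ (h.smul hactS hequiv g⁻¹)
  simp only [mem_halfTree, hequiv] at this ⊢
  rwa [← hdist g⁻¹ (g • y), ← hdist g⁻¹ (g • y), inv_smul_smul]

-- At a positive local maximum, both neighbours would step down to the same vertex of `T`, forming
-- a collapsing pair, across which the distance to `behindCollapsingPairs` has to go up.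
theorem distToSet_behindCollapsingPairs_eq_zero_of_le (hT : T.IsTree)
    (hq : ∀ a b : W, S.Adj a b → T.Adj (q a) (q b)) (hY : (behindCollapsingPairs S T q).Nonempty)
    {x u₁ u₂ : W} (hu₁ : S.Adj x u₁) (hu₂ : S.Adj x u₂) (hne : u₁ ≠ u₂)
    (hk₁ : T.distToSet (behindCollapsingPairs S T q) (q u₁) ≤
      T.distToSet (behindCollapsingPairs S T q) (q x))
    (hk₂ : T.distToSet (behindCollapsingPairs S T q) (q u₂) ≤
      T.distToSet (behindCollapsingPairs S T q) (q x)) :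
    T.distToSet (behindCollapsingPairs S T q) (q x) = 0 := by
  have hconv := isGeodConvex_behindCollapsingPairs hT hq
  by_contra hx
  have e₁ := hT.distToSet_add_one_eq_of_adj hY hconv (hq _ _ hu₁) hk₁ hx
  have e₂ := hT.distToSet_add_one_eq_of_adj hY hconv (hq _ _ hu₂) hk₂ hx
  have hpair : IsCollapsingPair S q x u₁ u₂ :=
    ⟨hu₁, hu₂, hne, hT.eq_of_adj_of_distToSet_add_one hY hconv (hq _ _ hu₁) (hq _ _ hu₂) e₁ e₂⟩
  have := distToSet_eq_add_one_of_subset_halfTree hY fun _ hy => hy x u₁ u₂ hpair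
  omega

theorem forall_eq_of_nonempty_behindCollapsingPairs (hS : S.IsTree) (hT : T.IsTree)
    {G : Type*} [Group G] [MulAction G W] [MulAction G V]
    (hactS : ∀ (g : G) (x y : W), S.Adj x y → S.Adj (g • x) (g • y))
    (hactT : ∀ (g : G) (x y : V), T.Adj x y → T.Adj (g • x) (g • y))
    (hmin : IsMinimalGTree S G) (hq : ∀ a b : W, S.Adj a b → T.Adj (q a) (q b))
    (hequiv : ∀ (g : G) (w : W), q (g • w) = g • q w)
    (hY : (behindCollapsingPairs S T q).Nonempty) :
    ∀ w a b : W, S.Adj w a → S.Adj w b → q a = q b → a = b := by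
  by_contra! ⟨p₀, a₀, b₀, h₁, h₂, hq₀, hne₀⟩
  set k : W → ℕ := fun x => T.distToSet (behindCollapsingPairs S T q) (q x) with hk
  have hinv : ∀ (g : G) (x : W), k (g • x) = k x := fun g x => by
    have hdist := dist_smul hT.connected hactT
    simp only [hk, hequiv]
    exact distToSet_smul hdist (fun g _ hy => smul_mem_behindCollapsingPairs hactS hdist hequiv g hy)
      g _
  have : Nonempty W := ⟨p₀⟩
  obtain ⟨x₀, hx₀⟩ : ∃ x₀, ∀ x, k x₀ ≤ k x := ⟨_, fun x => Function.argmin_le k x⟩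
  have hA := hmin {x | k x ≤ k x₀} ⟨x₀, le_refl (k x₀)⟩
    (hS.isGeodConvex_setOf_le (fun _ _ _ hu₁ hu₂ hne hk₁ hk₂ =>
      distToSet_behindCollapsingPairs_eq_zero_of_le hT hq hY hu₁ hu₂ hne hk₁ hk₂) _)
    fun g x hx => by simpa only [Set.mem_ofPred_eq, hinv] using hx
  have ha₀ : a₀ ∈ {x | k x ≤ k x₀} := hA ▸ Set.mem_univ a₀
  have hpair : k a₀ = k p₀ + 1 :=
    distToSet_eq_add_one_of_subset_halfTree hY fun _ hy => hy p₀ a₀ b₀ ⟨h₁, h₂, hne₀, hq₀⟩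
  have := hx₀ p₀
  change k a₀ ≤ k x₀ at ha₀
  omega

end CollapsingPairs

theorem stmt9_general {W V : Type*} (S : SimpleGraph W) (T : SimpleGraph V)
    (hS : S.IsTree) (hT : T.IsTree)
    (G : Type*) [Group G] [MulAction G W] [MulAction G V]
    (hactS : ∀ (g : G) (x y : W), S.Adj x y → S.Adj (g • x) (g • y))
    (hactT : ∀ (g : G) (x y : V), T.Adj x y → T.Adj (g • x) (g • y))
    (hmin : IsMinimalGTree S G)
    (q : W → V) (hq : ∀ a b : W, S.Adj a b → T.Adj (q a) (q b))
    (hequiv : ∀ (g : G) (w : W), q (g • w) = g • q w)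
    (hnotlocinj : ¬ ∀ (w a b : W), S.Adj w a → S.Adj w b → q a = q b → a = b) :
    ∀ τ₁ τ₂ : ℕ → V, IsGeodRay T τ₁ → IsGeodRay T τ₂ → ¬ RayEquiv τ₁ τ₂ →
      CollapsingPairFacesRay S T q τ₁ ∨ CollapsingPairFacesRay S T q τ₂ := by
  intro τ₁ τ₂ hτ₁ hτ₂ hne
  by_contra! hfaces
  obtain ⟨f₁, hf₁⟩ := hτ₁.exists_isBusemann hT
  obtain ⟨f₂, hf₂⟩ := hτ₂.exists_isBusemann hT
  obtain ⟨z, hz⟩ := exists_isMin_add hT hτ₁ hτ₂ hne hf₁ hf₂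
  refine hnotlocinj (forall_eq_of_nonempty_behindCollapsingPairs hS hT hactS hactT hmin hq hequiv
    ⟨z, fun p w₁ w₂ h => ?_⟩)
  exact mem_halfTree_of_isMin_add hT hf₁ hf₂ hz (hq _ _ h.1)
    (hf₁.add_one_of_not_collapsingPairFacesRay hT hq hfaces.1 h)
    (hf₂.add_one_of_not_collapsingPairFacesRay hT hq hfaces.2 h)

/-- Let `T` be a cocompact `G`-tree, `T̃` a minimal `G`-tree, and
`q : T̃ → T` a `G`-equivariant tree morphism which is not locally injective.
Then at most one end of `T` is faced by no collapsing pair: two inequivalent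
geodesic rays cannot both fail to be faced by a collapsing pair. -/
theorem stmt9 {W V : Type*} (S : SimpleGraph W) (T : SimpleGraph V)
    (hS : S.IsTree) (hT : T.IsTree)
    (G : Type*) [Group G] [MulAction G W] [MulAction G V]
    (hactS : ∀ (g : G) (x y : W), S.Adj x y → S.Adj (g • x) (g • y))
    (hactT : ∀ (g : G) (x y : V), T.Adj x y → T.Adj (g • x) (g • y))
    (hcocompact : ∃ s : Finset V, ∀ v : V, ∃ g : G, g • v ∈ s)
    (hmin : IsMinimalGTree S G)
    (q : W → V) (hq : ∀ a b : W, S.Adj a b → T.Adj (q a) (q b))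
    (hequiv : ∀ (g : G) (w : W), q (g • w) = g • q w)
    (hnotlocinj : ¬ ∀ (w a b : W), S.Adj w a → S.Adj w b → q a = q b → a = b) :
    ∀ τ₁ τ₂ : ℕ → V, IsGeodRay T τ₁ → IsGeodRay T τ₂ → ¬ RayEquiv τ₁ τ₂ →
      CollapsingPairFacesRay S T q τ₁ ∨ CollapsingPairFacesRay S T q τ₂ :=
  stmt9_general S T hS hT G hactS hactT hmin q hq hequiv hnotlocinj
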